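/- Let H be a connected non-bipartite graph with root v, and G a connected graph of order n ≥ 2. If v belongs to some local metric basis of H, then dim_l(G∘_v H) = n·(dim_l(H) − 1). -/

import Mathlib

open SimpleGraph

/-- A set `S` is a local metric generator for `G` if every pair of adjacent
vertices is distinguished, by distance, by some element of `S`. -/
def IsLocalMetricGenerator {V : Type*} (G : SimpleGraph V) (S : Set V) : Prop :=
  ∀ ⦃u v : V⦄, G.Adj u v → ∃ w ∈ S, G.dist u w ≠ G.dist v w

/-- The local metric dimension of a graph. -/
noncomputable def localMetricDim {V : Type*} [Fintype V] (G : SimpleGraph V) : ℕ :=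
  sInf {k | ∃ S : Finset V, IsLocalMetricGenerator G ↑S ∧ S.card = k}

/-- A local metric basis: a local metric generator of minimum cardinality. -/
def IsLocalMetricBasis {V : Type*} [Fintype V] (G : SimpleGraph V) (S : Finset V) : Prop :=
  IsLocalMetricGenerator G ↑S ∧ S.card = localMetricDim G

/-- The rooted product G ∘_v H: a copy of H is attached at its root v to each
vertex of G. Vertex (g, v) plays the role of the g-th vertex of G. -/
def rootedProd {V W : Type*} (G : SimpleGraph V) (H : SimpleGraph W) (v : W) :
    SimpleGraph (V × W) :=
  SimpleGraph.fromRel (fun a b =>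
    (a.1 = b.1 ∧ H.Adj a.2 b.2) ∨ (a.2 = v ∧ b.2 = v ∧ G.Adj a.1 b.1))

/-!
Distances in `G ∘_v H` are computed copywise: inside a copy of `H` they are those of `H`, and
between copies a shortest path runs through both roots. So the trace on one copy of a local metric
generator of `G ∘_v H`, together with the root, is a local metric generator of `H`; summing over
the copies gives `n (dim_l H - 1) ≤ dim_l (G ∘_v H)`. Conversely, for a local metric basis `B`
of `H` containing `v`, the set `B \ {v}` in every copy resolves all edges: an edge of a copy that
only `v` resolves is resolved from any other copy, and an edge between roots by `B \ {v}` in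
either endpoint's copy. Here `B \ {v}` is nonempty because `dim_l H = 1` would make `H`
bipartite (colour by the parity of the distance to the single resolving vertex).
-/

open Finset

section LocalMetricDimension

variable {V : Type*} {G : SimpleGraph V}

theorem SimpleGraph.Reachable.dist_map_le {V' : Type*} {G' : SimpleGraph V'} (f : G →g G')
    {x y : V} (h : G.Reachable x y) : G'.dist (f x) (f y) ≤ G.dist x y := by
  obtain ⟨p, hp⟩ := h.exists_walk_length_eq_dist
  simpa [hp] using dist_le (p.map f)

theorem isLocalMetricGenerator_univ : IsLocalMetricGenerator G Set.univ :=
  fun u _ huw => ⟨u, trivial, by rw [dist_self, dist_comm, dist_eq_one_iff_adj.mpr huw]; decide⟩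

theorem IsLocalMetricGenerator.colorable_two {S : Set V} {w : V}
    (hS : IsLocalMetricGenerator G S) (hSw : S ⊆ {w}) : G.Colorable 2 := by
  refine ⟨Coloring.mk (fun x => ⟨G.dist x w % 2, Nat.mod_lt _ two_pos⟩)
    fun {x y} hxy heq => ?_⟩
  obtain ⟨u, hu, hne⟩ := hS hxy
  obtain rfl : u = w := hSw hu
  have hparity : G.dist x u % 2 = G.dist y u % 2 := congrArg Fin.val heq
  rw [dist_comm, dist_comm (u := y)] at hne hparity
  rcases hxy.diff_dist_adj (u := u) with h | h | h <;> omega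

variable [Fintype V]

theorem localMetricDim_le_card {S : Finset V} (hS : IsLocalMetricGenerator G S) :
    localMetricDim G ≤ #S :=
  Nat.sInf_le ⟨S, hS, rfl⟩

theorem exists_isLocalMetricBasis (G : SimpleGraph V) : ∃ B, IsLocalMetricBasis G B :=
  Nat.sInf_mem (s := {k | ∃ S : Finset V, IsLocalMetricGenerator G S ∧ #S = k})
    ⟨_, univ, by simpa using isLocalMetricGenerator_univ, rfl⟩

theorem two_le_localMetricDim (hG : ¬ G.Colorable 2) : 2 ≤ localMetricDim G := by
  by_contra! hlt
  obtain ⟨B, hB, hcard⟩ := exists_isLocalMetricBasis G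
  cases isEmpty_or_nonempty V
  · exact hG (.of_isEmpty 2)
  · obtain ⟨w, hw⟩ := card_le_one_iff_subset_singleton.mp (hcard.trans_le (by omega))
    exact hG (hB.colorable_two (by exact_mod_cast hw))

end LocalMetricDimension

theorem Finset.sum_card_preimage_prodMk {α β : Type*} [Fintype α] (S : Finset (α × β)) :
    ∑ a, #(S.preimage (Prod.mk a) (Prod.mk_right_injective a).injOn) = #S := by
  classical
  rw [card_eq_sum_card_fiberwise (f := Prod.fst) (t := univ) fun _ _ => mem_univ _]
  refine sum_congr rfl fun a _ => card_nbij' (Prod.mk a) Prod.snd ?_ ?_ ?_ ?_ <;> intro <;> aesop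

section RootedProduct

variable {V W : Type*} {G : SimpleGraph V} {H : SimpleGraph W} {v : W}

theorem rootedProd_adj {g g' : V} {x y : W} :
    (rootedProd G H v).Adj (g, x) (g', y) ↔
      (g = g' ∧ H.Adj x y) ∨ (x = v ∧ y = v ∧ G.Adj g g') := by
  simp only [rootedProd, fromRel_adj, ne_eq]
  constructor
  · rintro ⟨-, (h | h) | ⟨h₁, h₂⟩ | ⟨h₁, h₂, h₃⟩⟩
    exacts [.inl h, .inr h, .inl ⟨h₁.symm, h₂.symm⟩, .inr ⟨h₂, h₁, h₃.symm⟩]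
  · rintro (⟨h₁, h₂⟩ | ⟨h₁, h₂, h₃⟩)
    · exact ⟨fun h => h₂.ne (Prod.ext_iff.mp h).2, .inl (.inl ⟨h₁, h₂⟩)⟩
    · exact ⟨fun h => h₃.ne (Prod.ext_iff.mp h).1, .inl (.inr ⟨h₁, h₂, h₃⟩)⟩

namespace rootedProd

variable (G H v)

def copyHom (g : V) : H →g rootedProd G H v :=
  ⟨Prod.mk g, fun h => rootedProd_adj.mpr (.inl ⟨rfl, h⟩)⟩

def rootHom : G →g rootedProd G H v :=
  ⟨(·, v), fun h => rootedProd_adj.mpr (.inr ⟨rfl, rfl, h⟩)⟩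

noncomputable def distFormula [DecidableEq V] (a b : V × W) : ℕ :=
  if a.1 = b.1 then H.dist a.2 b.2 else H.dist a.2 v + G.dist a.1 b.1 + H.dist v b.2

variable {G H v}

theorem distFormula_root [DecidableEq V] (g g' : V) (x : W) :
    distFormula G H v (g, v) (g', x) = G.dist g g' + H.dist v x := by
  unfold distFormula
  split_ifs with h
  · obtain rfl : g = g' := h
    simp
  · simp

theorem distFormula_le_of_adj [DecidableEq V] (hG : G.Connected) (hH : H.Connected)
    {g g' : V} {x y : W} (hab : (rootedProd G H v).Adj (g, x) (g', y)) (c : V × W) :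
    distFormula G H v (g, x) c ≤ distFormula G H v (g', y) c + 1 := by
  rcases rootedProd_adj.mp hab with ⟨rfl, hxy⟩ | ⟨rfl, rfl, hgg'⟩
  · have hxy : H.dist x y = 1 := dist_eq_one_iff_adj.mpr hxy
    unfold distFormula
    dsimp only
    split_ifs
    · have := hH.dist_triangle (u := x) (v := y) (w := c.2); omega
    · have := hH.dist_triangle (u := x) (v := y) (w := v); omega
  · have hgg' : G.dist g g' = 1 := dist_eq_one_iff_adj.mpr hgg'
    rw [distFormula_root, distFormula_root]
    have := hG.dist_triangle (u := g) (v := g') (w := c.1); omega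

theorem distFormula_le_length [DecidableEq V] (hG : G.Connected) (hH : H.Connected)
    {a b : V × W} (p : (rootedProd G H v).Walk a b) : distFormula G H v a b ≤ p.length := by
  induction p with
  | nil => simp [distFormula]
  | @cons a b c h p ih =>
    obtain ⟨g, x⟩ := a
    obtain ⟨g', y⟩ := b
    have := distFormula_le_of_adj hG hH h c
    rw [Walk.length_cons]; omega

theorem connected (hG : G.Connected) (hH : H.Connected) : (rootedProd G H v).Connected := by
  have : Nonempty V := hG.nonempty
  have : Nonempty W := hH.nonempty
  refine (connected_iff _).mpr ⟨fun a b => ?_, inferInstance⟩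
  exact (((hH.preconnected a.2 v).map (copyHom G H v a.1)).trans
    ((hG.preconnected a.1 b.1).map (rootHom G H v))).trans
    ((hH.preconnected v b.2).map (copyHom G H v b.1))

theorem dist_eq_distFormula [DecidableEq V] (hG : G.Connected) (hH : H.Connected)
    (a b : V × W) : (rootedProd G H v).dist a b = distFormula G H v a b := by
  refine le_antisymm ?_ ?_
  · obtain ⟨g, x⟩ := a
    obtain ⟨g', y⟩ := b
    unfold distFormula
    split_ifs with h
    · obtain rfl : g = g' := h
      exact (hH.preconnected x y).dist_map_le (copyHom G H v g)
    · have hconn := connected (v := v) hG hH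
      calc (rootedProd G H v).dist (g, x) (g', y)
          ≤ (rootedProd G H v).dist (g, x) (g, v) + (rootedProd G H v).dist (g, v) (g', v)
            + (rootedProd G H v).dist (g', v) (g', y) :=
            hconn.dist_triangle.trans (Nat.add_le_add_right hconn.dist_triangle _)
        _ ≤ H.dist x v + G.dist g g' + H.dist v y := by
          gcongr
          · exact (hH.preconnected x v).dist_map_le (copyHom G H v g)
          · exact (hG.preconnected g g').dist_map_le (rootHom G H v)
          · exact (hH.preconnected v y).dist_map_le (copyHom G H v g')
  · obtain ⟨p, hp⟩ := (connected hG hH).exists_walk_length_eq_dist a b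
    exact hp ▸ distFormula_le_length hG hH p

theorem dist_mk_mk_self (hG : G.Connected) (hH : H.Connected) (g : V) (x y : W) :
    (rootedProd G H v).dist (g, x) (g, y) = H.dist x y := by
  classical
  simp [dist_eq_distFormula hG hH, distFormula]

theorem dist_mk_mk_of_ne (hG : G.Connected) (hH : H.Connected) {g g' : V} (hg : g ≠ g')
    (x y : W) :
    (rootedProd G H v).dist (g, x) (g', y) = H.dist x v + G.dist g g' + H.dist v y := by
  classical
  simp [dist_eq_distFormula hG hH, distFormula, hg]

end rootedProd

open rootedProd

theorem isLocalMetricGenerator_rootedProd [Fintype V] [Nontrivial V] [DecidableEq W]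
    (hG : G.Connected) (hH : H.Connected) {B : Finset W} (hB : IsLocalMetricGenerator H B)
    {b : W} (hb : b ∈ B) (hbv : b ≠ v) :
    IsLocalMetricGenerator (rootedProd G H v) ↑(univ ×ˢ B.erase v : Finset (V × W)) := by
  have hbT (g : V) : (g, b) ∈ univ ×ˢ B.erase v := by simp [hb, hbv]
  rintro ⟨g, x⟩ ⟨g', y⟩ hadj
  rcases rootedProd_adj.mp hadj with ⟨rfl, hxy⟩ | ⟨rfl, rfl, hgg'⟩
  · obtain ⟨w, hwB, hw⟩ := hB hxy
    by_cases hwv : w = v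
    · subst hwv
      obtain ⟨g', hg'⟩ := exists_ne g
      refine ⟨(g', b), hbT g', ?_⟩
      rw [dist_mk_mk_of_ne hG hH hg'.symm, dist_mk_mk_of_ne hG hH hg'.symm]
      omega
    · refine ⟨(g, w), by simp [hwB, hwv], ?_⟩
      rwa [dist_mk_mk_self hG hH, dist_mk_mk_self hG hH]
  · refine ⟨(g, b), hbT g, ?_⟩
    rw [dist_mk_mk_self hG hH, dist_mk_mk_of_ne hG hH hgg'.ne.symm]
    have := hG.pos_dist_of_ne hgg'.ne.symm
    omega

theorem localMetricDim_le_card_preimage_add_one [Fintype W] (hG : G.Connected)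
    (hH : H.Connected) {S : Finset (V × W)} (hS : IsLocalMetricGenerator (rootedProd G H v) S)
    (g : V) :
    localMetricDim H ≤ #(S.preimage (Prod.mk g) (Prod.mk_right_injective g).injOn) + 1 := by
  classical
  refine (localMetricDim_le_card (S := insert v (S.preimage _ _)) ?_).trans (card_insert_le _ _)
  intro x y hxy
  obtain ⟨⟨g', z⟩, hz, hne⟩ := hS (rootedProd_adj.mpr (.inl ⟨rfl, hxy⟩) :
    (rootedProd G H v).Adj (g, x) (g, y))
  by_cases hg' : g = g'
  · subst hg'
    refine ⟨z, by simp [hz], ?_⟩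
    rwa [dist_mk_mk_self hG hH, dist_mk_mk_self hG hH] at hne
  · refine ⟨v, by simp, ?_⟩
    rw [dist_mk_mk_of_ne hG hH hg', dist_mk_mk_of_ne hG hH hg'] at hne
    omega

theorem card_mul_le_localMetricDim_rootedProd [Fintype V] [Fintype W] (hG : G.Connected)
    (hH : H.Connected) :
    Fintype.card V * (localMetricDim H - 1) ≤ localMetricDim (rootedProd G H v) := by
  obtain ⟨S, hS, hcard⟩ := exists_isLocalMetricBasis (rootedProd G H v)
  calc Fintype.card V * (localMetricDim H - 1) = ∑ _g : V, (localMetricDim H - 1) := by simp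
    _ ≤ ∑ g, #(S.preimage (Prod.mk g) (Prod.mk_right_injective g).injOn) :=
      sum_le_sum fun g _ =>
        Nat.sub_le_of_le_add (localMetricDim_le_card_preimage_add_one hG hH hS g)
    _ = localMetricDim (rootedProd G H v) := by rw [sum_card_preimage_prodMk, hcard]

end RootedProduct

/-- If the root v belongs to some local metric basis of the connected non-bipartite
graph H, then dim_l(G ∘_v H) = n · (dim_l(H) - 1). -/
theorem localMetricDim_rootedProd_of_root_mem {V W : Type*} [Fintype V] [Fintype W]
    (G : SimpleGraph V) (H : SimpleGraph W) (v : W) (hG : G.Connected) (hH : H.Connected)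
    (hnb : ¬ H.Colorable 2) (hn : 2 ≤ Fintype.card V)
    (hv : ∃ B : Finset W, IsLocalMetricBasis H B ∧ v ∈ B) :
    localMetricDim (rootedProd G H v) = Fintype.card V * (localMetricDim H - 1) := by
  classical
  obtain ⟨B, ⟨hB, hcard⟩, hvB⟩ := hv
  obtain ⟨b, hb, hbv⟩ := exists_mem_ne (hcard ▸ two_le_localMetricDim hnb) v
  have : Nontrivial V := Fintype.one_lt_card_iff_nontrivial.mp hn
  refine le_antisymm ?_ (card_mul_le_localMetricDim_rootedProd hG hH)
  calc localMetricDim (rootedProd G H v) ≤ #(univ ×ˢ B.erase v) :=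
        localMetricDim_le_card (isLocalMetricGenerator_rootedProd hG hH hB hb hbv)
    _ = Fintype.card V * (localMetricDim H - 1) := by
        rw [card_product, card_univ, card_erase_of_mem hvB, hcard]
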